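/- Let γ be a regular discount function and suppose |V1 − V2| > ε where V1 = (1/Γ_t)∑_{k=t}^∞ γ_k r_k and V2 = (1/Γ_t)∑_{k=t}^∞ γ_k r'_k with r_k, r'_k ∈ [0,1]. Then there exists k ∈ [t, t + H_t(1−ε)] with r_k ≠ r'_k. -/

import Mathlib

/-!
If the two reward streams agree on `[t, t + H]` with `H = H_t(1 - ε)`, the difference of the
normalised values only sees the discount mass beyond `t + H`. By the choice of `H` the
discount mass on `[t, t + H]` exceeds `(1 - ε) Γ_t`, so the remaining tail is below `ε Γ_t`,
and rewards in `[0, 1]` differ by at most `1` there.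
-/

open Filter Finset

/-- The effective horizon `H_t(p)`: the least `h` with `(1/Γ_t) ∑_{k=t}^{t+h} γ_k > p`,
where `Γ_t = ∑_{i≥t} γ_i`. -/
noncomputable def horizon (γ : ℕ → ℝ) (t : ℕ) (p : ℝ) : ℕ :=
  sInf {h : ℕ | p < (∑ k ∈ Finset.Icc t (t + h), γ k) / (∑' i : ℕ, γ (t + i))}

theorem Finset.sum_Icc_add_eq_sum_range {M : Type*} [AddCommMonoid M] (f : ℕ → M) (t h : ℕ) :
    ∑ k ∈ Icc t (t + h), f k = ∑ i ∈ range (h + 1), f (t + i) := by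
  rw [← Ico_add_one_right_eq_Icc, sum_Ico_eq_sum_range, add_assoc, Nat.add_sub_cancel_left]

theorem lt_sum_Icc_horizon_div {γ : ℕ → ℝ} {t : ℕ} {p : ℝ} (hsum : Summable γ)
    (hΓ : ∑' i, γ (t + i) ≠ 0) (hp : p < 1) :
    p < (∑ k ∈ Icc t (t + horizon γ t p), γ k) / ∑' i, γ (t + i) := by
  have hshift : Summable fun i => γ (t + i) := hsum.comp_injective (add_right_injective t)
  have hlim :
      Tendsto (fun h => (∑ k ∈ Icc t (t + h), γ k) / ∑' i, γ (t + i)) atTop (nhds 1) := by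
    simp_rw [sum_Icc_add_eq_sum_range]
    rw [← div_self hΓ]
    exact (hshift.hasSum.tendsto_sum_nat.comp (tendsto_add_atTop_nat 1)).div_const _
  exact Nat.sInf_mem (hlim.eventually_const_lt hp).exists

theorem summable_mul_of_mem_Icc {w a : ℕ → ℝ} (hw : Summable w) (hw0 : ∀ i, 0 ≤ w i)
    (ha : ∀ i, a i ∈ Set.Icc (0 : ℝ) 1) : Summable fun i => w i * a i :=
  hw.of_nonneg_of_le (fun i => mul_nonneg (hw0 i) (ha i).1)
    (fun i => mul_le_of_le_one_right (hw0 i) (ha i).2)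

theorem abs_tsum_mul_sub_tsum_mul_le_tsum_nat_add {w a b : ℕ → ℝ} {n : ℕ}
    (hw : Summable w) (hw0 : ∀ i, 0 ≤ w i) (ha : ∀ i, a i ∈ Set.Icc (0 : ℝ) 1)
    (hb : ∀ i, b i ∈ Set.Icc (0 : ℝ) 1) (hab : ∀ i < n, a i = b i) :
    |∑' i, w i * a i - ∑' i, w i * b i| ≤ ∑' i, w (i + n) := by
  have hwa := summable_mul_of_mem_Icc hw hw0 ha
  have hwb := summable_mul_of_mem_Icc hw hw0 hb
  have hdiff : Summable fun i => w i * (a i - b i) := by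
    simpa only [mul_sub] using hwa.sub hwb
  have hhead : ∑ i ∈ range n, w i * (a i - b i) = 0 :=
    sum_eq_zero fun i hi => by rw [hab i (mem_range.1 hi), sub_self, mul_zero]
  simp_rw [← hwa.tsum_sub hwb, ← mul_sub]
  rw [← hdiff.sum_add_tsum_nat_add n, hhead, zero_add, ← Real.norm_eq_abs]
  refine tsum_of_norm_bounded ((summable_nat_add_iff n).2 hw).hasSum fun i => ?_
  rw [Real.norm_eq_abs, abs_mul, abs_of_nonneg (hw0 _)]
  exact mul_le_of_le_one_right (hw0 _)
    (abs_sub_le_of_nonneg_of_le (ha _).1 (ha _).2 (hb _).1 (hb _).2)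

theorem stmt18_general (γ : ℕ → ℝ) (hpos : ∀ k, 0 ≤ γ k) (hsum : Summable γ)
    (hΓ : ∀ s, 0 < ∑' i : ℕ, γ (s + i))
    (t : ℕ) (ε : ℝ) (hε0 : 0 < ε)
    (r r' : ℕ → ℝ)
    (hr : ∀ k, r k ∈ Set.Icc (0 : ℝ) 1) (hr' : ∀ k, r' k ∈ Set.Icc (0 : ℝ) 1)
    (hdiff : ε < |(∑' k : ℕ, γ (t + k) * r (t + k)) / (∑' i : ℕ, γ (t + i)) -
      (∑' k : ℕ, γ (t + k) * r' (t + k)) / (∑' i : ℕ, γ (t + i))|) :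
    ∃ k, t ≤ k ∧ k ≤ t + horizon γ t (1 - ε) ∧ r k ≠ r' k := by
  by_contra! hagree
  set Γ := ∑' i, γ (t + i)
  set H := horizon γ t (1 - ε)
  have hshift : Summable fun i => γ (t + i) := hsum.comp_injective (add_right_injective t)
  have hhead : (1 - ε) * Γ < ∑ i ∈ range (H + 1), γ (t + i) := by
    rw [← sum_Icc_add_eq_sum_range, ← lt_div_iff₀ (hΓ t)]
    exact lt_sum_Icc_horizon_div hsum (hΓ t).ne' (by linarith)
  have htail : |∑' i, γ (t + i) * r (t + i) - ∑' i, γ (t + i) * r' (t + i)|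
      ≤ ∑' i, γ (t + (i + (H + 1))) :=
    abs_tsum_mul_sub_tsum_mul_le_tsum_nat_add hshift (fun _ => hpos _) (fun _ => hr _)
      (fun _ => hr' _) fun i hi => hagree (t + i) (by omega) (by omega)
  have hsplit := hshift.sum_add_tsum_nat_add (H + 1)
  rw [div_sub_div_same, abs_div, abs_of_pos (hΓ t), lt_div_iff₀ (hΓ t)] at hdiff
  linarith

theorem stmt18 (γ : ℕ → ℝ) (hpos : ∀ k, 0 ≤ γ k) (hsum : Summable γ)
    (hΓ : ∀ s, 0 < ∑' i : ℕ, γ (s + i))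
    (t : ℕ) (ε : ℝ) (hε0 : 0 < ε) (hε1 : ε < 1)
    (r r' : ℕ → ℝ)
    (hr : ∀ k, r k ∈ Set.Icc (0 : ℝ) 1) (hr' : ∀ k, r' k ∈ Set.Icc (0 : ℝ) 1)
    (hdiff : ε < |(∑' k : ℕ, γ (t + k) * r (t + k)) / (∑' i : ℕ, γ (t + i)) -
      (∑' k : ℕ, γ (t + k) * r' (t + k)) / (∑' i : ℕ, γ (t + i))|) :
    ∃ k, t ≤ k ∧ k ≤ t + horizon γ t (1 - ε) ∧ r k ≠ r' k :=
  stmt18_general γ hpos hsum hΓ t ε hε0 r r' hr hr' hdiff
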